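/- Gronwall-type blow-up control: suppose ζ : [0,T) → [0,∞) is nondecreasing, E₀ ≥ 0, and for all 0 < ε < T, ζ(T⁻) := sup_{t<T} ζ(t) satisfies ζ(T⁻) ≤ exp(C δ(ε) log(e + ζ(T⁻))) (√(Cε) + ζ(T−ε)), where δ(ε) → δ < M as ε → 0 and CM < 1. Then ζ(T⁻) < ∞, i.e., log(e + ζ(T⁻)) ≤ C' log(e + ζ(T−ε)) for some constant C' and small ε. -/

import Mathlib

open Real Filter Set

/-! Fix `θ` with `max (C δ) 0 < θ < 1` and `ε` so small that `C δf(ε) < θ`. With `x = e + ζ t`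
the hypothesis gives `x ≤ x ^ θ (e + √(Cε) + ζ(T - ε))`, and since `θ < 1` the power of `x` can be
absorbed: `(1 - θ) log x ≤ log (e + √(Cε) + ζ(T - ε))`, uniformly in `t`. Bounding
`log (e + s + z) ≤ (1 + log (1 + s)) log (e + z)` then yields `C'`. -/

lemma log_exp_one_add_le_div_of_le_exp_mul {y a c θ : ℝ} (hy : 0 ≤ y) (hc : c ≤ θ)
    (hθ₀ : 0 ≤ θ) (hθ₁ : θ < 1) (h : y ≤ exp (c * log (exp 1 + y)) * a) :
    log (exp 1 + y) ≤ log (exp 1 + a) / (1 - θ) := by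
  set x := exp 1 + y
  have he : 1 ≤ exp 1 := one_le_exp zero_le_one
  have hx : 0 < x := by positivity
  have hlog : 0 ≤ log x := log_nonneg (by linarith)
  have ha : 0 ≤ a := by
    by_contra! ha
    nlinarith [exp_pos (c * log x)]
  have hθy : y ≤ exp (θ * log x) * a :=
    h.trans (mul_le_mul_of_nonneg_right (exp_le_exp.2 (mul_le_mul_of_nonneg_right hc hlog)) ha)
  have hpow : 1 ≤ exp (θ * log x) := one_le_exp (by positivity)
  have hxle : x ≤ exp (θ * log x) * (exp 1 + a) := by nlinarith
  have habsorb : log x ≤ θ * log x + log (exp 1 + a) := by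
    have := log_le_log hx hxle
    rwa [log_mul (by positivity) (by positivity), log_exp] at this
  rw [le_div_iff₀ (by linarith)]
  linarith

lemma log_exp_one_add_add_le {s z : ℝ} (hs : 0 ≤ s) (hz : 0 ≤ z) :
    log (exp 1 + (s + z)) ≤ (1 + log (1 + s)) * log (exp 1 + z) := by
  have he : 1 ≤ exp 1 := one_le_exp zero_le_one
  have hz1 : 1 ≤ log (exp 1 + z) := by
    rw [le_log_iff_exp_le (by positivity)]
    linarith
  have hs1 : 0 ≤ log (1 + s) := log_nonneg (by linarith)
  have hprod : exp 1 + (s + z) ≤ (exp 1 + z) * (1 + s) := by nlinarith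
  have := log_le_log (by positivity) hprod
  rw [log_mul (by positivity) (by positivity)] at this
  nlinarith

theorem stmt17_general (T C M δ : ℝ) (hT : 0 < T) (hC : 0 < C) (hδM : δ < M) (hCM : C * M < 1)
    (ζ : ℝ → ℝ) (hζ : ∀ t, 0 ≤ ζ t)
    (δf : ℝ → ℝ)
    (hlim : Filter.Tendsto δf (nhdsWithin 0 (Set.Ioi 0)) (nhds δ))
    (hineq : ∀ ε ∈ Set.Ioo (0 : ℝ) T, ∀ t ∈ Set.Ico (0 : ℝ) T,
      ζ t ≤ Real.exp (C * δf ε * Real.log (Real.exp 1 + ζ t)) *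
        (Real.sqrt (C * ε) + ζ (T - ε))) :
    BddAbove (ζ '' Set.Ico 0 T) ∧
      ∃ C' : ℝ, 0 < C' ∧ ∃ ε ∈ Set.Ioo (0 : ℝ) T, ∀ t ∈ Set.Ico (0 : ℝ) T,
        Real.log (Real.exp 1 + ζ t) ≤ C' * Real.log (Real.exp 1 + ζ (T - ε)) := by
  have hCδ : max (C * δ) 0 < 1 := max_lt ((mul_lt_mul_of_pos_left hδM hC).trans hCM) one_pos
  obtain ⟨θ, hθ, hθ₁⟩ := exists_between hCδ
  obtain ⟨hCδθ, hθ₀⟩ := max_lt_iff.1 hθ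
  obtain ⟨ε, hεθ, hεT, hε₀⟩ : ∃ ε, C * δf ε < θ ∧ ε < T ∧ 0 < ε :=
    (((hlim.const_mul C).eventually_lt_const hCδθ).and
      ((tendsto_id.mono_right nhdsWithin_le_nhds).eventually_lt_const hT |>.and
        self_mem_nhdsWithin)).exists
  have hε : ε ∈ Ioo 0 T := ⟨hε₀, hεT⟩
  have key : ∀ t ∈ Ico (0 : ℝ) T,
      log (exp 1 + ζ t) ≤ log (exp 1 + (sqrt (C * ε) + ζ (T - ε))) / (1 - θ) := fun t ht =>
    log_exp_one_add_le_div_of_le_exp_mul (hζ t) hεθ.le hθ₀.le hθ₁ (hineq ε hε t ht)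
  refine ⟨⟨exp (log (exp 1 + (sqrt (C * ε) + ζ (T - ε))) / (1 - θ)), ?_⟩, ?_⟩
  · rintro _ ⟨t, ht, rfl⟩
    have := (log_le_iff_le_exp (by linarith [exp_pos 1, hζ t])).1 (key t ht)
    linarith [exp_pos 1]
  · have hs : 0 ≤ log (1 + sqrt (C * ε)) := log_nonneg (by linarith [sqrt_nonneg (C * ε)])
    refine ⟨(1 + log (1 + sqrt (C * ε))) / (1 - θ), by apply div_pos <;> linarith,
      ε, hε, fun t ht => (key t ht).trans ?_⟩
    rw [div_mul_eq_mul_div]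
    exact div_le_div_of_nonneg_right (log_exp_one_add_add_le (sqrt_nonneg _) (hζ _))
      (by linarith)

/-- Abstract logarithmic Gronwall-type blow-up control. -/
theorem stmt17 (T C M δ : ℝ) (hT : 0 < T) (hC : 0 < C) (hδM : δ < M) (hCM : C * M < 1)
    (ζ : ℝ → ℝ) (hζ : ∀ t, 0 ≤ ζ t) (hmono : MonotoneOn ζ (Set.Ico 0 T))
    (δf : ℝ → ℝ) (hδf : ∀ ε, 0 ≤ δf ε)
    (hlim : Filter.Tendsto δf (nhdsWithin 0 (Set.Ioi 0)) (nhds δ))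
    (hineq : ∀ ε ∈ Set.Ioo (0 : ℝ) T, ∀ t ∈ Set.Ico (0 : ℝ) T,
      ζ t ≤ Real.exp (C * δf ε * Real.log (Real.exp 1 + ζ t)) *
        (Real.sqrt (C * ε) + ζ (T - ε))) :
    BddAbove (ζ '' Set.Ico 0 T) ∧
      ∃ C' : ℝ, 0 < C' ∧ ∃ ε ∈ Set.Ioo (0 : ℝ) T, ∀ t ∈ Set.Ico (0 : ℝ) T,
        Real.log (Real.exp 1 + ζ t) ≤ C' * Real.log (Real.exp 1 + ζ (T - ε)) :=
  stmt17_general T C M δ hT hC hδM hCM ζ hζ δf hlim hineq
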